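/- Let a, b ∈ ℝ and let t ∈ ℂ with Im t > 0. Then the symmetric 3×3 complex matrix φ(t) with rows ((t + a²i, (a²−b²)/2 + abi, −b + ai), ((a²−b²)/2 + abi, t + 2ab + b²i, a + bi), (−b + ai, a + bi, i)) has positive definite imaginary part; that is, φ(t) lies in the Siegel upper half-space ℍ₃. -/

import Mathlib

open Complex Matrix

/-- Membership in the Siegel upper half-space: symmetric with positive definite
imaginary part. -/
def SiegelUpper (g : ℕ) (τ : Matrix (Fin g) (Fin g) ℂ) : Prop :=
  τ.IsSymm ∧ (Matrix.of fun j k => (τ j k).im : Matrix (Fin g) (Fin g) ℝ).PosDef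

/-- The period matrix `φ(t)` of the Shimura curve family, for parameters `a, b ∈ ℝ`. -/
noncomputable def phi (a b : ℝ) (t : ℂ) : Matrix (Fin 3) (Fin 3) ℂ :=
  !![t + (a : ℂ)^2 * I, ((a : ℂ)^2 - (b : ℂ)^2)/2 + (a : ℂ)*(b : ℂ)*I, -(b : ℂ) + (a : ℂ)*I;
     ((a : ℂ)^2 - (b : ℂ)^2)/2 + (a : ℂ)*(b : ℂ)*I, t + 2*(a : ℂ)*(b : ℂ) + (b : ℂ)^2 * I,
       (a : ℂ) + (b : ℂ)*I;
     -(b : ℂ) + (a : ℂ)*I, (a : ℂ) + (b : ℂ)*I, I]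

/- The imaginary part of `φ(t)` is `Im t · diag(1, 1, 0) + v vᵀ` with `v = (a, b, 1)`, i.e. the
Gram matrix `Pᵀ · diag(Im t, Im t, 1) · P` of the unipotent shear `P = shear a b` sending `x` to
`(x₀, x₁, a x₀ + b x₁ + x₂)`. A positive definite diagonal matrix stays positive definite under
congruence by an invertible matrix. -/

def shear (a b : ℝ) : Matrix (Fin 3) (Fin 3) ℝ :=
  !![1, 0, 0; 0, 1, 0; a, b, 1]

lemma det_shear (a b : ℝ) : (shear a b).det = 1 := by
  simp [shear, det_fin_three]

lemma mulVec_shear_injective (a b : ℝ) : Function.Injective (shear a b).mulVec :=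
  mulVec_injective_of_isUnit <| (isUnit_iff_isUnit_det _).2 <| by rw [det_shear]; exact isUnit_one

lemma phi_isSymm (a b : ℝ) (t : ℂ) : (phi a b t).IsSymm := by
  ext i j
  fin_cases i <;> fin_cases j <;> simp [phi, transpose_apply]

lemma im_phi_eq (a b : ℝ) (t : ℂ) :
    (of fun j k => (phi a b t j k).im : Matrix (Fin 3) (Fin 3) ℝ) =
      (shear a b)ᴴ * diagonal ![t.im, t.im, 1] * shear a b := by
  ext i j
  fin_cases i <;> fin_cases j <;>
    simp [phi, shear, mul_apply, Fin.sum_univ_three, sq, mul_comm]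

theorem stmt_1 (a b : ℝ) (t : ℂ) (ht : 0 < t.im) :
    SiegelUpper 3 (phi a b t) := by
  refine ⟨phi_isSymm a b t, ?_⟩
  rw [im_phi_eq]
  refine PosDef.conjTranspose_mul_mul_same ?_ (mulVec_shear_injective a b)
  refine posDef_diagonal_iff.2 fun i => ?_
  fin_cases i <;> simp [ht]
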